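/- Let H be a pencilled hfd line set in PG(5,K) whose vertices are all collinear, i.e. there is a 2-dimensional subspace of V containing every vertex of H. Then there is a line D (2-dimensional subspace of V) such that the set of vertices of H is exactly the set of all points of D, the line D itself belongs to H, and H has at least two distinct carrier planes. -/

import Mathlib

/-- The Klein quadratic form on `K^6`. -/
def kleinQ {K : Type*} [Field K] (x : Fin 6 → K) : K :=
  x 0 * x 1 + x 2 * x 3 + x 4 * x 5

/-- The polar bilinear form `B(x,y) = Q(x+y) - Q(x) - Q(y)`. -/
def kleinB {K : Type*} [Field K] (x y : Fin 6 → K) : K :=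
  kleinQ (x + y) - kleinQ x - kleinQ y

/-- The polar subspace `π₅(S)` of a subspace `S`. -/
def kleinPolar {K : Type*} [Field K] (S : Submodule K (Fin 6 → K)) :
    Submodule K (Fin 6 → K) where
  carrier := {y | ∀ s ∈ S, kleinB s y = 0}
  add_mem' := by
    intro a b ha hb s hs
    have h1 := ha s hs
    have h2 := hb s hs
    simp only [kleinB, kleinQ, Pi.add_apply] at *
    linear_combination h1 + h2
  zero_mem' := by
    intro s hs
    simp [kleinB, kleinQ]
  smul_mem' := by
    intro c a ha s hs
    have h1 := ha s hs
    simp only [kleinB, kleinQ, Pi.add_apply, Pi.smul_apply, smul_eq_mul] at *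
    linear_combination c * h1

/-- `τ` is a tangent hyperplane of the Klein quadric. -/
def IsTangentHyperplane {K : Type*} [Field K] (τ : Submodule K (Fin 6 → K)) : Prop :=
  ∃ x : Fin 6 → K, x ≠ 0 ∧ kleinQ x = 0 ∧ τ = kleinPolar (Submodule.span K {x})

/-- A subspace is external to the Klein quadric. -/
def IsExternal {K : Type*} [Field K] (S : Submodule K (Fin 6 → K)) : Prop :=
  ∀ s ∈ S, s ≠ 0 → kleinQ s ≠ 0

/-- A `0`-secant of the Klein quadric: an external line. -/
def IsSecant {K : Type*} [Field K] (G : Submodule K (Fin 6 → K)) : Prop :=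
  Module.finrank K G = 2 ∧ IsExternal G

/-- The pencil of lines with vertex `v` and carrier plane `κ`. -/
def pencil {K : Type*} [Field K] (v κ : Submodule K (Fin 6 → K)) :
    Set (Submodule K (Fin 6 → K)) :=
  {X | Module.finrank K X = 2 ∧ v ≤ X ∧ X ≤ κ}

/-- An hfd line set: a set of `0`-secants such that every tangent hyperplane
contains exactly one member. -/
def IsHfd {K : Type*} [Field K] (H : Set (Submodule K (Fin 6 → K))) : Prop :=
  (∀ G ∈ H, IsSecant G) ∧
    ∀ τ : Submodule K (Fin 6 → K), IsTangentHyperplane τ → ∃! G, G ∈ H ∧ G ≤ τ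

/-- A pencilled hfd line set: every member lies in a pencil entirely contained in `H`. -/
def IsPencilledHfd {K : Type*} [Field K] (H : Set (Submodule K (Fin 6 → K))) : Prop :=
  IsHfd H ∧
    ∀ G ∈ H, ∃ v κ : Submodule K (Fin 6 → K), Module.finrank K v = 1 ∧
      Module.finrank K κ = 3 ∧ v ≤ κ ∧ pencil v κ ⊆ H ∧ G ∈ pencil v κ

/-- `v` is a vertex of the pencilled hfd line set `H`. -/
def IsVertex {K : Type*} [Field K] (H : Set (Submodule K (Fin 6 → K)))
    (v : Submodule K (Fin 6 → K)) : Prop :=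
  Module.finrank K v = 1 ∧ ∃ κ : Submodule K (Fin 6 → K),
    Module.finrank K κ = 3 ∧ v ≤ κ ∧ pencil v κ ⊆ H

/-- `κ` is a carrier plane of the pencilled hfd line set `H`. -/
def IsCarrier {K : Type*} [Field K] (H : Set (Submodule K (Fin 6 → K)))
    (κ : Submodule K (Fin 6 → K)) : Prop :=
  Module.finrank K κ = 3 ∧ ∃ v : Submodule K (Fin 6 → K),
    Module.finrank K v = 1 ∧ v ≤ κ ∧ pencil v κ ⊆ H


/-!
The tangent hyperplane `y^⊥` at a singular point `y` contains exactly one member `G` of `H`,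
and `G` contains every vertex `v ⊥ y`: the carrier plane of a pencil at `v` meets `y^⊥` in a
line through `v`, which then lies in `H ∩ y^⊥`. Every `y^⊥` also contains a vertex; taking `y`
not orthogonal to a given vertex produces a second one, so the vertices span the line `L`, and
taking `y ⊥ L` in the totally singular plane `⟨e₁, e₃, e₅⟩` gives `L = G ∈ H`. For a point `p`
of the external line `L` there is a singular `y ⊥ p` with `L ⊄ y^⊥`: otherwise, writing
`p = ⟨u⟩` and `w ∈ L ∖ p`, the functional `B(w, ·)` would be a multiple `μ B(u, ·)` on that
self-polar plane, making `w - μu` a nonzero singular vector of `L`. The vertex in `y^⊥` is then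
`p`. Finally, if `κ` were the only carrier plane, every line of `κ` through a point off `L`
would meet `L` in a vertex with carrier plane `κ`, so that point would be a vertex as well.
-/

open Module Submodule

section LinearAlgebra

variable {K V : Type*} [Field K] [AddCommGroup V] [Module K V] [FiniteDimensional K V]

theorem finrank_sup_eq_two {p q : Submodule K V} (hp : finrank K p = 1) (hq : finrank K q = 1)
    (hpq : p ≠ q) : finrank K ↥(p ⊔ q) = 2 := by
  have hinf : p ⊓ q = ⊥ := by
    by_contra h
    obtain ⟨s, ⟨hsp, hsq⟩, hs0⟩ := exists_mem_ne_zero_of_ne_bot h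
    exact hpq ((eq_span_singleton_of_mem_of_finrank_eq_one hp hsp hs0).trans
      (eq_span_singleton_of_mem_of_finrank_eq_one hq hsq hs0).symm)
  have := finrank_sup_add_finrank_inf_eq p q
  rw [hinf, finrank_bot] at this
  omega

theorem exists_finrank_eq_two_of_le {v W : Submodule K V} (hv : finrank K v = 1) (hvW : v ≤ W)
    (hW : 2 ≤ finrank K W) : ∃ X : Submodule K V, finrank K X = 2 ∧ v ≤ X ∧ X ≤ W := by
  obtain ⟨y, hyW, hyv⟩ := SetLike.exists_of_lt (lt_of_le_of_ne hvW (by rintro rfl; omega))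
  have hy0 : y ≠ 0 := by rintro rfl; exact hyv v.zero_mem
  refine ⟨v ⊔ K ∙ y, finrank_sup_eq_two hv (finrank_span_singleton hy0) ?_, le_sup_left,
    sup_le hvW ((span_singleton_le_iff_mem _ _).2 hyW)⟩
  rintro rfl
  exact hyv (mem_span_singleton_self y)

theorem finrank_le_finrank_inf_ker_add_one (κ : Submodule K V) (f : V →ₗ[K] K) :
    finrank K κ ≤ finrank K ↥(κ ⊓ LinearMap.ker f) + 1 := by
  have hsup := finrank_sup_add_finrank_inf_eq κ (LinearMap.ker f)
  have hker := f.finrank_range_add_finrank_ker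
  have hrange : finrank K (LinearMap.range f) ≤ 1 := by
    simpa using (LinearMap.range f).finrank_le
  have := (κ ⊔ LinearMap.ker f).finrank_le
  omega

theorem inf_ne_bot_of_finrank_eq_two {X L κ : Submodule K V} (hX : finrank K X = 2)
    (hL : finrank K L = 2) (hκ : finrank K κ = 3) (hXκ : X ≤ κ) (hLκ : L ≤ κ) : X ⊓ L ≠ ⊥ := by
  intro h
  have hsup := finrank_sup_add_finrank_inf_eq X L
  have := finrank_mono (sup_le hXκ hLκ)
  rw [h, finrank_bot] at hsup
  omega

end LinearAlgebra

section Klein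

variable {K : Type*} [Field K]

theorem kleinB_apply (x y : Fin 6 → K) :
    kleinB x y = x 0 * y 1 + x 1 * y 0 + x 2 * y 3 + x 3 * y 2 + x 4 * y 5 + x 5 * y 4 := by
  simp only [kleinB, kleinQ, Pi.add_apply]
  ring

theorem kleinB_comm (x y : Fin 6 → K) : kleinB x y = kleinB y x := by
  rw [kleinB_apply, kleinB_apply]
  ring

def kleinForm : LinearMap.BilinForm K (Fin 6 → K) :=
  LinearMap.mk₂ K kleinB
    (fun _ _ _ => by simp only [kleinB_apply, Pi.add_apply]; ring)
    (fun _ _ _ => by simp only [kleinB_apply, Pi.smul_apply, smul_eq_mul]; ring)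
    (fun _ _ _ => by simp only [kleinB_apply, Pi.add_apply]; ring)
    (fun _ _ _ => by simp only [kleinB_apply, Pi.smul_apply, smul_eq_mul]; ring)

@[simp]
theorem kleinForm_apply (x y : Fin 6 → K) : kleinForm x y = kleinB x y := rfl

theorem mem_kleinPolar_span_singleton {x y : Fin 6 → K} :
    y ∈ kleinPolar (K ∙ x) ↔ kleinB x y = 0 := by
  refine ⟨fun h => h x (mem_span_singleton_self x), fun h s hs => ?_⟩
  obtain ⟨c, rfl⟩ := mem_span_singleton.1 hs
  change kleinForm (c • x) y = 0
  rw [LinearMap.map_smul₂, kleinForm_apply, h, smul_zero]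

theorem kleinPolar_span_singleton (x : Fin 6 → K) :
    kleinPolar (K ∙ x) = LinearMap.ker (kleinForm x) := by
  ext y
  simp [mem_kleinPolar_span_singleton]

theorem kleinQ_single (i : Fin 6) (a : K) : kleinQ (Pi.single i a) = 0 := by
  fin_cases i <;> simp [kleinQ]

theorem exists_kleinQ_eq_zero_kleinB_ne_zero {b : Fin 6 → K} (hb : b ≠ 0) :
    ∃ e : Fin 6 → K, e ≠ 0 ∧ kleinQ e = 0 ∧ kleinB e b ≠ 0 := by
  by_contra! h
  have hb' : b 1 = 0 ∧ b 0 = 0 ∧ b 3 = 0 ∧ b 2 = 0 ∧ b 5 = 0 ∧ b 4 = 0 := by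
    simpa [kleinB_apply, Fin.forall_fin_succ] using
      fun i => h (Pi.single i 1) (by simp) (kleinQ_single i 1)
  exact hb (by ext j; fin_cases j <;> simp [hb'])

end Klein

section SingularPlane

variable {K : Type*} [Field K]

/-- The totally singular plane `⟨e₁, e₃, e₅⟩`, which is its own polar. -/
def singularPlane : (Fin 3 → K) →ₗ[K] (Fin 6 → K) where
  toFun c := ![0, c 0, 0, c 1, 0, c 2]
  map_add' c d := by ext i; fin_cases i <;> simp
  map_smul' a c := by ext i; fin_cases i <;> simp

theorem kleinQ_singularPlane (c : Fin 3 → K) : kleinQ (singularPlane c) = 0 := by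
  simp [singularPlane, kleinQ]

theorem singularPlane_injective : Function.Injective (singularPlane (K := K)) := by
  intro c d h
  ext i
  fin_cases i
  · simpa [singularPlane] using congrFun h 1
  · simpa [singularPlane] using congrFun h 3
  · simpa [singularPlane] using congrFun h 5

theorem kleinQ_eq_zero_of_forall_kleinB_singularPlane {z : Fin 6 → K}
    (h : ∀ c, kleinB z (singularPlane c) = 0) : kleinQ z = 0 := by
  have hz : z 0 = 0 ∧ z 2 = 0 ∧ z 4 = 0 := by
    simpa [singularPlane, kleinB_apply, Fin.forall_fin_succ] using fun i => h (Pi.single i 1)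
  simp [kleinQ, hz]

theorem exists_kleinQ_eq_zero_le_kleinPolar {S : Submodule K (Fin 6 → K)}
    (hS : finrank K S ≤ 2) :
    ∃ x : Fin 6 → K, x ≠ 0 ∧ kleinQ x = 0 ∧ S ≤ kleinPolar (K ∙ x) := by
  let Φ : (Fin 3 → K) →ₗ[K] S →ₗ[K] K :=
    LinearMap.domRestrict' S ∘ₗ kleinForm ∘ₗ singularPlane
  have hΦ : LinearMap.ker Φ ≠ ⊥ := LinearMap.ker_ne_bot_of_finrank_lt (by
    rw [Module.finrank_linearMap_self]; simpa using hS.trans_lt (by norm_num))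
  obtain ⟨c, hc, hc0⟩ := exists_mem_ne_zero_of_ne_bot hΦ
  refine ⟨singularPlane c, fun h => hc0 (singularPlane_injective (h.trans (map_zero _).symm)),
    kleinQ_singularPlane c, fun s hs => mem_kleinPolar_span_singleton.2 ?_⟩
  simpa [Φ] using LinearMap.congr_fun (LinearMap.mem_ker.1 hc) ⟨s, hs⟩

theorem IsExternal.exists_kleinQ_eq_zero_mem_kleinPolar_notMem {S : Submodule K (Fin 6 → K)}
    (hS : IsExternal S) {u w : Fin 6 → K} (hu : u ∈ S) (hw : w ∈ S) (hwu : w ∉ K ∙ u) :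
    ∃ y : Fin 6 → K, kleinQ y = 0 ∧ u ∈ kleinPolar (K ∙ y) ∧ w ∉ kleinPolar (K ∙ y) := by
  by_contra! h
  let f := kleinForm u ∘ₗ singularPlane
  let g := kleinForm w ∘ₗ singularPlane
  have hker : ⨅ _ : Unit, LinearMap.ker f ≤ LinearMap.ker g := by
    intro c hc
    have hc : kleinB u (singularPlane c) = 0 := by simpa [f] using hc
    simpa [g, kleinB_comm w, mem_kleinPolar_span_singleton] using
      h _ (kleinQ_singularPlane c) (by rwa [mem_kleinPolar_span_singleton, kleinB_comm])
  obtain ⟨μ, hμ⟩ := mem_span_singleton.1 (by simpa using mem_span_of_iInf_ker_le_ker hker)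
  have hz : kleinQ (w - μ • u) = 0 := kleinQ_eq_zero_of_forall_kleinB_singularPlane fun c => by
    rw [← kleinForm_apply, map_sub, map_smul, LinearMap.sub_apply, LinearMap.smul_apply,
      sub_eq_zero]
    exact (LinearMap.congr_fun hμ c).symm
  refine hS _ (sub_mem hw (smul_mem _ _ hu)) (sub_ne_zero.2 ?_) hz
  rintro rfl
  exact hwu (smul_mem _ _ (mem_span_singleton_self u))

end SingularPlane

section Hfd

variable {K : Type*} [Field K] {H : Set (Submodule K (Fin 6 → K))}

theorem IsHfd.le_of_isVertex (hH : IsHfd H) {x : Fin 6 → K} (hx0 : x ≠ 0) (hx : kleinQ x = 0)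
    {G : Submodule K (Fin 6 → K)} (hG : G ∈ H) (hGx : G ≤ kleinPolar (K ∙ x))
    {v : Submodule K (Fin 6 → K)} (hv : IsVertex H v) (hvx : v ≤ kleinPolar (K ∙ x)) :
    v ≤ G := by
  obtain ⟨hv1, κ, hκ, hvκ, hpen⟩ := hv
  have hW : 2 ≤ finrank K ↥(κ ⊓ kleinPolar (K ∙ x)) := by
    have := finrank_le_finrank_inf_ker_add_one κ (kleinForm x)
    rw [kleinPolar_span_singleton]
    omega
  obtain ⟨X, hX, hvX, hXW⟩ := exists_finrank_eq_two_of_le hv1 (le_inf hvκ hvx) hW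
  have hXG : X = G := (hH.2 _ ⟨x, hx0, hx, rfl⟩).unique
    ⟨hpen ⟨hX, hvX, hXW.trans inf_le_left⟩, hXW.trans inf_le_right⟩ ⟨hG, hGx⟩
  exact hXG ▸ hvX

theorem exists_isCarrier_ne {L κ : Submodule K (Fin 6 → K)} (hL : finrank K L = 2)
    (hLκ : L ≤ κ) (hκ : IsCarrier H κ)
    (hv : ∀ p, IsVertex H p ↔ finrank K p = 1 ∧ p ≤ L) :
    ∃ κ', IsCarrier H κ' ∧ κ' ≠ κ := by
  by_contra! hκ_unique
  obtain ⟨w, hwκ, hwL⟩ :=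
    SetLike.exists_of_lt (lt_of_le_of_ne hLκ (by rintro rfl; rw [hκ.1] at hL; omega))
  have hw0 : w ≠ 0 := by rintro rfl; exact hwL L.zero_mem
  have hpen : pencil (K ∙ w) κ ⊆ H := by
    rintro X ⟨hX, hwX, hXκ⟩
    obtain ⟨s, ⟨hsX, hsL⟩, hs0⟩ :=
      exists_mem_ne_zero_of_ne_bot (inf_ne_bot_of_finrank_eq_two hX hL hκ.1 hXκ hLκ)
    obtain ⟨hs, κ', hκ', hsκ', hpen'⟩ :=
      (hv _).2 ⟨finrank_span_singleton hs0, (span_singleton_le_iff_mem _ _).2 hsL⟩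
    obtain rfl := hκ_unique κ' ⟨hκ', _, hs, hsκ', hpen'⟩
    exact hpen' ⟨hX, (span_singleton_le_iff_mem _ _).2 hsX, hXκ⟩
  have hw : IsVertex H (K ∙ w) :=
    ⟨finrank_span_singleton hw0, κ, hκ.1, (span_singleton_le_iff_mem _ _).2 hwκ, hpen⟩
  exact hwL ((hv _).1 hw |>.2 (mem_span_singleton_self w))

namespace IsPencilledHfd

theorem exists_isVertex_le_kleinPolar (hH : IsPencilledHfd H) {x : Fin 6 → K} (hx0 : x ≠ 0)
    (hx : kleinQ x = 0) :
    ∃ v, IsVertex H v ∧ v ≤ kleinPolar (K ∙ x) := by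
  obtain ⟨G, ⟨hG, hGx⟩, -⟩ := hH.1.2 _ ⟨x, hx0, hx, rfl⟩
  obtain ⟨v, κ, hv, hκ, hvκ, hpen, hGpen⟩ := hH.2 G hG
  exact ⟨v, ⟨hv, κ, hκ, hvκ, hpen⟩, hGpen.2.1.trans hGx⟩

theorem exists_isVertex_ne (hH : IsPencilledHfd H) {p : Submodule K (Fin 6 → K)}
    (hp : finrank K p = 1) :
    ∃ v, IsVertex H v ∧ v ≠ p := by
  obtain ⟨b, hbp, hb0⟩ := exists_mem_ne_zero_of_ne_bot (p := p) (by rintro rfl; simp at hp)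
  obtain ⟨e, he0, he, heb⟩ := exists_kleinQ_eq_zero_kleinB_ne_zero hb0
  obtain ⟨v, hv, hve⟩ := hH.exists_isVertex_le_kleinPolar he0 he
  exact ⟨v, hv, fun hvp => heb (mem_kleinPolar_span_singleton.1 (hve (hvp ▸ hbp)))⟩

theorem mem_of_isVertex_le (hH : IsPencilledHfd H) {L : Submodule K (Fin 6 → K)}
    (hL : finrank K L = 2) (hLv : ∀ v, IsVertex H v → v ≤ L) : L ∈ H := by
  obtain ⟨v₀, hv₀, -⟩ :=
    hH.exists_isVertex_le_kleinPolar (Pi.single_ne_zero_iff.2 one_ne_zero) (kleinQ_single 0 1)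
  obtain ⟨v₁, hv₁, hne⟩ := hH.exists_isVertex_ne hv₀.1
  obtain ⟨x, hx0, hx, hLx⟩ := exists_kleinQ_eq_zero_le_kleinPolar hL.le
  obtain ⟨G, ⟨hG, hGx⟩, -⟩ := hH.1.2 _ ⟨x, hx0, hx, rfl⟩
  have h2 := finrank_sup_eq_two hv₁.1 hv₀.1 hne
  have hvG (v) (hv : IsVertex H v) : v ≤ G :=
    hH.1.le_of_isVertex hx0 hx hG hGx hv ((hLv v hv).trans hLx)
  have hv₀₁L : v₁ ⊔ v₀ = L :=
    eq_of_le_of_finrank_le (sup_le (hLv v₁ hv₁) (hLv v₀ hv₀)) (by rw [hL, h2])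
  have hv₀₁G : v₁ ⊔ v₀ = G :=
    eq_of_le_of_finrank_le (sup_le (hvG v₁ hv₁) (hvG v₀ hv₀)) (by rw [(hH.1.1 G hG).1, h2])
  exact hv₀₁L ▸ hv₀₁G ▸ hG

theorem isVertex_of_le (hH : IsPencilledHfd H) {L : Submodule K (Fin 6 → K)} (hLH : L ∈ H)
    (hLv : ∀ v, IsVertex H v → v ≤ L) {p : Submodule K (Fin 6 → K)}
    (hp : finrank K p = 1) (hpL : p ≤ L) : IsVertex H p := by
  obtain ⟨hL2, hLext⟩ := hH.1.1 L hLH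
  obtain ⟨u, hup, hu0⟩ := exists_mem_ne_zero_of_ne_bot (p := p) (by rintro rfl; simp at hp)
  obtain ⟨w, hwL, hwp⟩ := SetLike.exists_of_lt (lt_of_le_of_ne hpL (by rintro rfl; omega))
  rw [eq_span_singleton_of_mem_of_finrank_eq_one hp hup hu0] at hwp ⊢
  obtain ⟨y, hy, huy, hwy⟩ :=
    hLext.exists_kleinQ_eq_zero_mem_kleinPolar_notMem (hpL hup) hwL hwp
  have hy0 : y ≠ 0 := by
    rintro rfl
    exact hwy (mem_kleinPolar_span_singleton.2 (by simp [kleinB_apply]))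
  obtain ⟨v, hv, hvy⟩ := hH.exists_isVertex_le_kleinPolar hy0 hy
  -- both `v` and `K ∙ u` lie in `L ∩ y^⊥`, which is at most a point since `w ∉ y^⊥`
  have hW : finrank K ↥(L ⊓ kleinPolar (K ∙ y)) < 2 :=
    hL2 ▸ finrank_lt_finrank_of_lt (inf_lt_left.2 fun h => hwy (h hwL))
  have hvW : v = L ⊓ kleinPolar (K ∙ y) :=
    eq_of_le_of_finrank_le (le_inf (hLv v hv) hvy) (by rw [hv.1]; omega)
  have huW : K ∙ u = L ⊓ kleinPolar (K ∙ y) :=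
    eq_of_le_of_finrank_le (le_inf ((span_singleton_le_iff_mem _ _).2 (hpL hup))
      ((span_singleton_le_iff_mem _ _).2 huy)) (by rw [finrank_span_singleton hu0]; omega)
  exact huW ▸ hvW ▸ hv

end IsPencilledHfd

end Hfd

/-- Main Theorem, part (c): collinear vertices.
If the vertices of a pencilled hfd line set `H` are all collinear, then there is a
line `D` whose points are exactly the vertices of `H`, `D` itself belongs to `H`,
and `H` has at least two distinct carrier planes. -/
theorem collinear_vertices {K : Type*} [Field K]
    (H : Set (Submodule K (Fin 6 → K))) (hH : IsPencilledHfd H)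
    (hc : ∃ L : Submodule K (Fin 6 → K), Module.finrank K L = 2 ∧
      ∀ v : Submodule K (Fin 6 → K), IsVertex H v → v ≤ L) :
    ∃ D : Submodule K (Fin 6 → K), Module.finrank K D = 2 ∧
      (∀ v : Submodule K (Fin 6 → K),
        IsVertex H v ↔ (Module.finrank K v = 1 ∧ v ≤ D)) ∧
      D ∈ H ∧
      ∃ κ₁ κ₂ : Submodule K (Fin 6 → K),
        IsCarrier H κ₁ ∧ IsCarrier H κ₂ ∧ κ₁ ≠ κ₂ := by
  obtain ⟨L, hL, hLv⟩ := hc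
  have hLH : L ∈ H := hH.mem_of_isVertex_le hL hLv
  have hv : ∀ v, IsVertex H v ↔ finrank K v = 1 ∧ v ≤ L := fun v =>
    ⟨fun h => ⟨h.1, hLv v h⟩, fun h => hH.isVertex_of_le hLH hLv h.1 h.2⟩
  obtain ⟨u, κ, hu, hκ, huκ, hpen, hLpen⟩ := hH.2 L hLH
  have hcar : IsCarrier H κ := ⟨hκ, u, hu, huκ, hpen⟩
  obtain ⟨κ', hκ', hne⟩ := exists_isCarrier_ne hL hLpen.2.2 hcar hv
  exact ⟨L, hL, hv, hLH, κ', κ, hκ', hcar, hne⟩
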